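/- Let n ≥ 1 and let j_1, …, j_n be any integers with 0 ≤ j_m ≤ n for all m. Then the permutation t = c_{j_n,n} c_{j_{n−1},n−1} ⋯ c_{j_1,1} ∈ S_{2n} preserves the order of {1,…,n}: for all 1 ≤ i < m ≤ n one has t(i) < t(m). -/
import Mathlib


/-- The subgroup `S ⊆ S_{2n}` of permutations fixing each of the last `n` points
(`n+1, …, 2n` in one-based terms, i.e. the indices `i` with `n ≤ i` in zero-based terms). -/
def Sfix (n : ℕ) : Set (Equiv.Perm (Fin (2 * n))) :=
  {g | ∀ i : Fin (2 * n), n ≤ (i : ℕ) → g i = i}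

/-- The double coset `O_σ = {g σ h : g, h ∈ S}`. -/
def dcoset (n : ℕ) (σ : Equiv.Perm (Fin (2 * n))) : Set (Equiv.Perm (Fin (2 * n))) :=
  {t | ∃ g ∈ Sfix n, ∃ h ∈ Sfix n, t = g * σ * h}

/-- The length of a permutation: its number of inversions. -/
noncomputable def len (n : ℕ) (σ : Equiv.Perm (Fin (2 * n))) : ℕ :=
  {p : Fin (2 * n) × Fin (2 * n) | p.1 < p.2 ∧ σ p.2 < σ p.1}.ncard

/-- The adjacent transposition `s_i = (i, i+1)` of `{1, …, m}` (one-based), i.e. the swap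
of the zero-based positions `i-1` and `i`; it is the identity for out-of-range `i`. -/
def sTrans (m i : ℕ) : Equiv.Perm (Fin m) :=
  if h : 1 ≤ i ∧ i < m then
    Equiv.swap ⟨i - 1, by omega⟩ ⟨i, h.2⟩
  else 1

/-- The cycle `c_{k,j} = s_{j+n-k} s_{j+n-k+1} ⋯ s_{j+n-1} ∈ S_{2n}` (with `c_{0,j} = e`). -/
def cyc (n k j : ℕ) : Equiv.Perm (Fin (2 * n)) :=
  ((List.range k).map fun t => sTrans (2 * n) (j + n - k + t)).prod

/-- The product `c_{k_n,n} c_{k_{n-1},n-1} ⋯ c_{k_1,1} ∈ S_{2n}` associated to a sequence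
`[k_n, …, k_1]` (encoded as a function `k : ℕ → ℕ` on the indices `1, …, n`). -/
def cycProd (n : ℕ) (k : ℕ → ℕ) : Equiv.Perm (Fin (2 * n)) :=
  ((List.range n).map fun t => cyc n (k (n - t)) (n - t)).prod

/-- The bound `max (max_{j < i ≤ n} (k_i + j + 1 - i)) j` appearing in admissibility. -/
def admBound (n : ℕ) (k : ℕ → ℕ) (j : ℕ) : ℕ :=
  max ((Finset.Ioc j n).sup fun i => k i + j + 1 - i) j

/-- A sequence `[k_n, …, k_1]` of nonnegative integers is admissible if
`k_j ≤ max (max_{j < i ≤ n} (k_i + j + 1 - i)) j` for every `1 ≤ j ≤ n`. -/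
def Admissible (n : ℕ) (k : ℕ → ℕ) : Prop :=
  ∀ j, 1 ≤ j → j ≤ n → k j ≤ admBound n k j

lemma sTrans_val (m i : ℕ) (h1 : 1 ≤ i) (h2 : i < m) (v : Fin m) :
    ((sTrans m i v : ℕ)) =
      if (v : ℕ) = i - 1 then i else if (v : ℕ) = i then i - 1 else (v : ℕ) := by
  rw [sTrans, dif_pos ⟨h1, h2⟩, Equiv.swap_apply_def]
  by_cases hv1 : (v : ℕ) = i - 1
  · rw [if_pos (Fin.ext_iff.mpr hv1), if_pos hv1]
  · rw [if_neg (fun h => hv1 (Fin.ext_iff.mp h)), if_neg hv1]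
    by_cases hv2 : (v : ℕ) = i
    · rw [if_pos (Fin.ext_iff.mpr hv2), if_pos hv2]
    · rw [if_neg (fun h => hv2 (Fin.ext_iff.mp h)), if_neg hv2]

lemma cyc_succ (n j k : ℕ) (hkj : k + 1 ≤ j + n) :
    cyc n (k + 1) j = sTrans (2 * n) (j + n - (k + 1)) * cyc n k j := by
  rw [cyc, cyc, List.range_succ_eq_map, List.map_cons, List.prod_cons, List.map_map]
  congr 1
  have h : ((fun t => sTrans (2 * n) (j + n - (k + 1) + t)) ∘ Nat.succ) =
      fun t => sTrans (2 * n) (j + n - k + t) := by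
    funext t
    simp only [Function.comp_apply]
    congr 1
    omega
  rw [h]

lemma cyc_val (n j : ℕ) (hj1 : 1 ≤ j) (hjn : j ≤ n) :
    ∀ k, k ≤ n → ∀ x : Fin (2 * n), (x : ℕ) + 2 ≤ j + n →
      ((cyc n k j x : ℕ)) = if j + n ≤ (x : ℕ) + 1 + k then (x : ℕ) + 1 else (x : ℕ) := by
  intro k
  induction k with
  | zero =>
    intro _ x hx
    rw [if_neg (by omega)]
    simp [cyc]
  | succ k ih =>
    intro hk x hx
    rw [cyc_succ n j k (by omega), Equiv.Perm.mul_apply]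
    have hv := ih (by omega) x hx
    rw [sTrans_val (2 * n) (j + n - (k + 1)) (by omega) (by omega)]
    split_ifs at hv ⊢ <;> omega
/-- Partial products: the product `c_{k_m,m} ⋯ c_{k_1,1}`. -/
def Qfun (n : ℕ) (j : ℕ → ℕ) (m : ℕ) : Equiv.Perm (Fin (2 * n)) :=
  ((List.range m).map fun t => cyc n (j (m - t)) (m - t)).prod

lemma Qfun_succ (n : ℕ) (j : ℕ → ℕ) (m : ℕ) :
    Qfun n j (m + 1) = cyc n (j (m + 1)) (m + 1) * Qfun n j m := by
  rw [Qfun, Qfun, List.range_succ_eq_map, List.map_cons, List.prod_cons, List.map_map]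
  congr 1
  have h : ((fun t => cyc n (j (m + 1 - t)) (m + 1 - t)) ∘ Nat.succ) =
      fun t => cyc n (j (m - t)) (m - t) := by
    funext t
    simp only [Function.comp_apply, Nat.succ_sub_succ]
  rw [h]

lemma Qfun_key (n : ℕ) (j : ℕ → ℕ) (hj : ∀ m, 1 ≤ m → m ≤ n → j m ≤ n) :
    ∀ m, m ≤ n →
      (∀ x : Fin (2 * n), (x : ℕ) < n → (Qfun n j m x : ℕ) ≤ (x : ℕ) + m) ∧
      (∀ x y : Fin (2 * n), (x : ℕ) < n → (y : ℕ) < n → (x : ℕ) < (y : ℕ) →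
        (Qfun n j m x : ℕ) < (Qfun n j m y : ℕ)) := by
  intro m
  induction m with
  | zero =>
    intro _
    constructor
    · intro x _; simp [Qfun]
    · intro x y _ _ hxy; simpa [Qfun] using hxy
  | succ m ih =>
    intro hm
    obtain ⟨ihb, ihm⟩ := ih (by omega)
    have hcv : ∀ x : Fin (2 * n), (x : ℕ) < n →
        ((cyc n (j (m + 1)) (m + 1)) (Qfun n j m x) : ℕ) =
          if (m + 1) + n ≤ (Qfun n j m x : ℕ) + 1 + j (m + 1) then (Qfun n j m x : ℕ) + 1
          else (Qfun n j m x : ℕ) := by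
      intro x hx
      exact cyc_val n (m + 1) (by omega) (by omega) (j (m + 1))
        (hj (m + 1) (by omega) (by omega)) (Qfun n j m x)
        (by have := ihb x hx; omega)
    constructor
    · intro x hx
      rw [Qfun_succ, Equiv.Perm.mul_apply, hcv x hx]
      have := ihb x hx
      split_ifs <;> omega
    · intro x y hx hy hxy
      rw [Qfun_succ, Equiv.Perm.mul_apply, Equiv.Perm.mul_apply, hcv x hx, hcv y hy]
      have h1 := ihb x hx
      have h2 := ihb y hy
      have h3 := ihm x y hx hy hxy
      split_ifs <;> omega

/-- For any integers `0 ≤ j_m ≤ n`, the permutation `t = c_{j_n,n} ⋯ c_{j_1,1} ∈ S_{2n}`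
preserves the order of the first `n` points: `t(i) < t(m)` for `1 ≤ i < m ≤ n`. -/
theorem cycProd_orderPreserving_on_first_half (n : ℕ) (hn : 1 ≤ n) (j : ℕ → ℕ)
    (hj : ∀ m, 1 ≤ m → m ≤ n → j m ≤ n) :
    ∀ a b : Fin (2 * n), (b : ℕ) < n → a < b → cycProd n j a < cycProd n j b := by
  intro a b hb hab
  have h : cycProd n j = Qfun n j n := rfl
  rw [h, Fin.lt_def]
  exact (Qfun_key n j hj n le_rfl).2 a b (lt_trans (Fin.lt_def.mp hab) hb) hb
    (Fin.lt_def.mp hab)
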